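/- Let T : X₁×⋯×Xₙ → Y be a bounded multilinear operator between Banach spaces, with linearization T̃ : X₁⊗_π⋯⊗_π Xₙ → Y and associated Σ-operator f_T = T̃|_{Σ_{X₁,…,Xₙ}}. Then for any reasonable crossnorm β on X₁⊗⋯⊗Xₙ, ‖T‖ = Lip^π(f_T) ≤ Lip^β(f_T) ≤ 2^{n−1} Lip^π(f_T), where Lip^β denotes the Lipschitz constant of f_T with respect to the metric induced by β on the Segre cone. -/

import Mathlib

/- Common framework: Σ-operators, reasonable crossnorms, Σ-ideals and Σ-tensor norms,
following S. García-Hernández, "The duality between ideals of multilinear operators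
and tensor norms". -/

open scoped TensorProduct
open PiTensorProduct

universe u

noncomputable section

/-- The Segre cone: the set of decomposable (elementary) tensors in `⨂ᵢ Xᵢ`. -/
def Segre (𝕜 : Type u) [RCLike 𝕜] {ι : Type} [Fintype ι] (X : ι → Type u)
    [∀ i, NormedAddCommGroup (X i)] [∀ i, NormedSpace 𝕜 (X i)] :
    Set (⨂[𝕜] i, X i) :=
  {u | ∃ x : (i : ι) → X i, u = ⨂ₜ[𝕜] i, x i}



/-- The set of values `|x₁*⊗⋯⊗xₙ*(u)|` over functionals `xᵢ* ∈ B_{Xᵢ*}`. -/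
def epsSet {𝕜 : Type u} [RCLike 𝕜] {ι : Type} [Fintype ι] {X : ι → Type u}
    [∀ i, NormedAddCommGroup (X i)] [∀ i, NormedSpace 𝕜 (X i)]
    (u : ⨂[𝕜] i, X i) : Set ℝ :=
  {r | ∃ f : ∀ i, X i →L[𝕜] 𝕜, (∀ i, ‖f i‖ ≤ 1) ∧
    r = ‖PiTensorProduct.lift
      ((ContinuousMultilinearMap.mkPiAlgebra 𝕜 ι 𝕜).compContinuousLinearMap
        f).toMultilinearMap u‖}

/-- The classical injective tensor norm
`ε(u) = sup { |x₁*⊗⋯⊗xₙ*(u)| : xᵢ* ∈ B_{Xᵢ*} }`. -/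
def epsSeminorm (𝕜 : Type u) [RCLike 𝕜] {ι : Type} [Fintype ι] (X : ι → Type u)
    [∀ i, NormedAddCommGroup (X i)] [∀ i, NormedSpace 𝕜 (X i)] :
    (⨂[𝕜] i, X i) → ℝ := fun u => sSup (epsSet u)

section EpsLemmas

variable {𝕜 : Type u} [RCLike 𝕜] {ι : Type} [Fintype ι] [Nonempty ι] {X : ι → Type u}
    [∀ i, NormedAddCommGroup (X i)] [∀ i, NormedSpace 𝕜 (X i)]

theorem epsSet_le (u : ⨂[𝕜] i, X i) : ∀ r ∈ epsSet u, r ≤ projectiveSeminorm u := by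
  rintro r ⟨f, hf, rfl⟩
  refine ((norm_eval_le_projectiveSeminorm _ u).trans (le_of_eq (mul_comm _ _))).trans ?_
  calc projectiveSeminorm u *
        ‖(ContinuousMultilinearMap.mkPiAlgebra 𝕜 ι 𝕜).compContinuousLinearMap f‖
      ≤ projectiveSeminorm u * 1 := by
        refine mul_le_mul_of_nonneg_left ?_ (apply_nonneg _ u)
        refine (ContinuousMultilinearMap.norm_compContinuousLinearMap_le _ _).trans ?_
        exact mul_le_one₀ ContinuousMultilinearMap.norm_mkPiAlgebra_le
          (Finset.prod_nonneg fun i _ => norm_nonneg _)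
          (Finset.prod_le_one (fun i _ => norm_nonneg _) (fun i _ => hf i))
    _ = projectiveSeminorm u := mul_one _

theorem epsSet_bdd (u : ⨂[𝕜] i, X i) : BddAbove (epsSet u) :=
  ⟨projectiveSeminorm u, fun r hr => epsSet_le u r hr⟩

theorem epsSeminorm_nonneg (u : ⨂[𝕜] i, X i) : 0 ≤ epsSeminorm 𝕜 X u :=
  Real.sSup_nonneg (by rintro r ⟨f, hf, rfl⟩; exact norm_nonneg _)

theorem epsSeminorm_le_projectiveSeminorm (u : ⨂[𝕜] i, X i) :
    epsSeminorm 𝕜 X u ≤ projectiveSeminorm u :=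
  Real.sSup_le (epsSet_le u) (apply_nonneg projectiveSeminorm u)

theorem epsSeminorm_add_le (u v : ⨂[𝕜] i, X i) :
    epsSeminorm 𝕜 X (u + v) ≤ epsSeminorm 𝕜 X u + epsSeminorm 𝕜 X v := by
  refine Real.sSup_le ?_ (add_nonneg (epsSeminorm_nonneg u) (epsSeminorm_nonneg v))
  rintro r ⟨f, hf, rfl⟩
  rw [map_add]
  refine (norm_add_le _ _).trans (add_le_add ?_ ?_)
  · exact le_csSup (epsSet_bdd u) ⟨f, hf, rfl⟩
  · exact le_csSup (epsSet_bdd v) ⟨f, hf, rfl⟩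

theorem epsSeminorm_smul_le (c : 𝕜) (u : ⨂[𝕜] i, X i) :
    epsSeminorm 𝕜 X (c • u) ≤ ‖c‖ * epsSeminorm 𝕜 X u := by
  refine Real.sSup_le ?_ (mul_nonneg (norm_nonneg c) (epsSeminorm_nonneg u))
  rintro r ⟨f, hf, rfl⟩
  rw [map_smul, norm_smul]
  exact mul_le_mul_of_nonneg_left (le_csSup (epsSet_bdd u) ⟨f, hf, rfl⟩) (norm_nonneg c)

theorem epsSeminorm_smul (c : 𝕜) (u : ⨂[𝕜] i, X i) :
    epsSeminorm 𝕜 X (c • u) = ‖c‖ * epsSeminorm 𝕜 X u := by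
  rcases eq_or_ne c 0 with rfl | hc
  · rw [norm_zero, zero_mul, zero_smul]
    refine le_antisymm (Real.sSup_le ?_ le_rfl) (epsSeminorm_nonneg 0)
    rintro r ⟨f, hf, rfl⟩
    simp
  · refine le_antisymm (epsSeminorm_smul_le c u) ?_
    have h := epsSeminorm_smul_le c⁻¹ (c • u)
    rw [inv_smul_smul₀ hc, norm_inv] at h
    calc ‖c‖ * epsSeminorm 𝕜 X u
        ≤ ‖c‖ * (‖c‖⁻¹ * epsSeminorm 𝕜 X (c • u)) :=
          mul_le_mul_of_nonneg_left h (norm_nonneg c)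
      _ = epsSeminorm 𝕜 X (c • u) := by
          rw [← mul_assoc, mul_inv_cancel₀ (norm_ne_zero_iff.mpr hc), one_mul]

end EpsLemmas


theorem projectiveSeminorm_map_le {𝕜 : Type u} [RCLike 𝕜] {ι : Type} [Fintype ι]
    {E F : ι → Type u} [∀ i, NormedAddCommGroup (E i)] [∀ i, NormedSpace 𝕜 (E i)]
    [∀ i, NormedAddCommGroup (F i)] [∀ i, NormedSpace 𝕜 (F i)]
    (g : ∀ i, E i →ₗ[𝕜] F i) (hg : ∀ i x, ‖g i x‖ ≤ ‖x‖) (u : ⨂[𝕜] i, E i) :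
    projectiveSeminorm (PiTensorProduct.map g u) ≤ projectiveSeminorm u := by
  rw [projectiveSeminorm_apply, projectiveSeminorm_apply]
  letI := nonempty_subtype.mpr (nonempty_lifts u)
  refine le_ciInf fun p => ?_
  have hmem : (List.map (fun y : 𝕜 × (∀ i, E i) => (y.1, fun i => g i (y.2 i))) (FreeAddMonoid.toList p.1) :
      FreeAddMonoid (𝕜 × ∀ i, F i)) ∈ lifts (PiTensorProduct.map g u) := by
    refine (mem_lifts_iff _ _).mpr ?_
    have hp := (mem_lifts_iff u p.1).mp p.2
    calc (List.map (fun x : 𝕜 × (∀ i, F i) => x.1 • ⨂ₜ[𝕜] i, x.2 i)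
          (List.map (fun y : 𝕜 × (∀ i, E i) => (y.1, fun i => g i (y.2 i))) (FreeAddMonoid.toList p.1))).sum
        = (List.map ((PiTensorProduct.map g) ∘ (fun x : 𝕜 × (∀ i, E i) =>
            x.1 • ⨂ₜ[𝕜] i, x.2 i)) (FreeAddMonoid.toList p.1)).sum := by
          rw [List.map_map]
          congr 1
          refine List.map_congr_left fun y _ => ?_
          simp [PiTensorProduct.map_tprod]
      _ = PiTensorProduct.map g u := by
          rw [← List.map_map, ← map_list_sum, hp]
  refine ciInf_le_of_le (bddBelow_projectiveSemiNormAux _) ⟨_, hmem⟩ ?_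
  simp only [projectiveSeminormAux]
  erw [List.map_map]
  refine List.sum_le_sum fun y _ => ?_
  simp only [Function.comp_apply]
  refine mul_le_mul_of_nonneg_left ?_ (norm_nonneg _)
  exact Finset.prod_le_prod (fun i _ => norm_nonneg _) (fun i _ => hg i _)

/-- A reasonable crossnorm on `⨂ᵢ Xᵢ`: a seminorm-like functional lying between the
injective and projective tensor seminorms. -/
structure ReasonableCrossnorm (𝕜 : Type u) [RCLike 𝕜] {ι : Type} [Fintype ι] [Nonempty ι]
    (X : ι → Type u) [∀ i, NormedAddCommGroup (X i)] [∀ i, NormedSpace 𝕜 (X i)] :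
    Type u where
  toFun : (⨂[𝕜] i, X i) → ℝ
  add_le' : ∀ u v, toFun (u + v) ≤ toFun u + toFun v
  smul' : ∀ (c : 𝕜) (u), toFun (c • u) = ‖c‖ * toFun u
  le_proj' : ∀ u, toFun u ≤ projectiveSeminorm u
  inj_le' : ∀ u, epsSeminorm 𝕜 X u ≤ toFun u

section Basic

variable {𝕜 : Type u} [RCLike 𝕜] {ι : Type} [Fintype ι] [Nonempty ι] {X : ι → Type u}
    [∀ i, NormedAddCommGroup (X i)] [∀ i, NormedSpace 𝕜 (X i)]
    {Y : Type u} [NormedAddCommGroup Y] [NormedSpace 𝕜 Y]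

/-- The projective tensor norm `π` as a reasonable crossnorm. -/
def ReasonableCrossnorm.proj : ReasonableCrossnorm 𝕜 X where
  toFun := projectiveSeminorm
  add_le' := fun u v => map_add_le_add _ u v
  smul' := fun c u => map_smul_eq_mul _ c u
  le_proj' := fun _ => le_rfl
  inj_le' := fun u => epsSeminorm_le_projectiveSeminorm u

/-- The injective tensor norm `ε` as a reasonable crossnorm. -/
def ReasonableCrossnorm.inj : ReasonableCrossnorm 𝕜 X where
  toFun := epsSeminorm 𝕜 X
  add_le' := fun u v => epsSeminorm_add_le u v
  smul' := fun c u => epsSeminorm_smul c u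
  le_proj' := fun u => epsSeminorm_le_projectiveSeminorm u
  inj_le' := fun _ => le_rfl

/-- `𝓛^β(X₁,…,Xₙ)`: the space of linear functionals on `⨂ᵢ Xᵢ` that are bounded
with respect to `β` (equivalently, multilinear forms whose `β`-linearization is
bounded). -/
def BetaDual (β : ReasonableCrossnorm 𝕜 X) : Submodule 𝕜 ((⨂[𝕜] i, X i) →ₗ[𝕜] 𝕜) where
  carrier := {f | ∃ C, 0 ≤ C ∧ ∀ u, ‖f u‖ ≤ C * β.toFun u}
  add_mem' := by
    rintro f g ⟨C, hC, hf⟩ ⟨D, hD, hg⟩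
    exact ⟨C + D, add_nonneg hC hD, fun u => by
      simpa [add_mul] using (norm_add_le (f u) (g u)).trans (add_le_add (hf u) (hg u))⟩
  zero_mem' := ⟨0, le_rfl, fun u => by simp⟩
  smul_mem' := by
    rintro c f ⟨C, hC, hf⟩
    exact ⟨‖c‖ * C, mul_nonneg (norm_nonneg c) hC, fun u => by
      simpa [norm_smul, mul_assoc] using mul_le_mul_of_nonneg_left (hf u) (norm_nonneg c)⟩

/-- The dual norm `‖·‖_β` of a `β`-bounded functional (multilinear form). -/
def betaDualNorm (β : ReasonableCrossnorm 𝕜 X) (f : (⨂[𝕜] i, X i) →ₗ[𝕜] 𝕜) : ℝ :=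
  sInf {C | 0 ≤ C ∧ ∀ u, ‖f u‖ ≤ C * β.toFun u}

/-- Evaluation of continuous functionals at a point, as a linear map into the
algebraic dual of the topological dual. -/
def evalCLM (𝕜 : Type u) [RCLike 𝕜] (M : Type u) [NormedAddCommGroup M]
    [NormedSpace 𝕜 M] : M →ₗ[𝕜] ((M →L[𝕜] 𝕜) →ₗ[𝕜] 𝕜) where
  toFun y :=
    { toFun := fun g => g y
      map_add' := fun g h => rfl
      map_smul' := fun c g => rfl }
  map_add' y z := by ext g; simp
  map_smul' c y := by ext g; simp

/-- Evaluation of `β`-bounded forms at a tensor. -/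
def evalBeta (β : ReasonableCrossnorm 𝕜 X) :
    (⨂[𝕜] i, X i) →ₗ[𝕜] ((BetaDual β) →ₗ[𝕜] 𝕜) where
  toFun u :=
    { toFun := fun f => f.1 u
      map_add' := fun f g => rfl
      map_smul' := fun c f => rfl }
  map_add' u v := by ext f; exact f.1.map_add u v
  map_smul' c u := by ext f; exact f.1.map_smul c u

/-- Evaluation pairing: an element of `𝓛^β(X₁,…,Xₙ) ⊗ Y` acts as a functional on
`X₁⊗⋯⊗Xₙ⊗Y*` by `⟨φ⊗y , u⊗y*⟩ = φ(u)·y*(y)`. -/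
def evalLD (β : ReasonableCrossnorm 𝕜 X) :
    ((BetaDual β) ⊗[𝕜] Y) →ₗ[𝕜] (((⨂[𝕜] i, X i) ⊗[𝕜] (Y →L[𝕜] 𝕜)) →ₗ[𝕜] 𝕜) :=
  (TensorProduct.dualDistrib 𝕜 (⨂[𝕜] i, X i) (Y →L[𝕜] 𝕜)).comp
    (TensorProduct.map (BetaDual β).subtype (evalCLM 𝕜 Y))

/-- Converse pairing: an element of `X₁⊗⋯⊗Xₙ⊗Y` acts as a functional on
`𝓛^β(X₁,…,Xₙ) ⊗ Y*` by `⟨u⊗y , φ⊗y*⟩ = φ(u)·y*(y)`. -/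
def pairSF (β : ReasonableCrossnorm 𝕜 X) :
    ((⨂[𝕜] i, X i) ⊗[𝕜] Y) →ₗ[𝕜] (((BetaDual β) ⊗[𝕜] (Y →L[𝕜] 𝕜)) →ₗ[𝕜] 𝕜) :=
  (TensorProduct.dualDistrib 𝕜 (BetaDual β) (Y →L[𝕜] 𝕜)).comp
    (TensorProduct.map (evalBeta β) (evalCLM 𝕜 Y))

/-- The functional `φ ⊗ y*` on `X₁⊗⋯⊗Xₙ⊗Y`. -/
def funcSY (φ : (⨂[𝕜] i, X i) →ₗ[𝕜] 𝕜) (g : Y →L[𝕜] 𝕜) :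
    ((⨂[𝕜] i, X i) ⊗[𝕜] Y) →ₗ[𝕜] 𝕜 :=
  TensorProduct.dualDistrib 𝕜 (⨂[𝕜] i, X i) Y (φ ⊗ₜ[𝕜] (g : Y →ₗ[𝕜] 𝕜))

/-- The rank one multilinear operator `φ · y : (x¹,…,xⁿ) ↦ φ(x¹,…,xⁿ)·y`. -/
def rankOne (φ : MultilinearMap 𝕜 X 𝕜) (y : Y) : MultilinearMap 𝕜 X Y :=
  (LinearMap.toSpanSingleton 𝕜 Y y).compMultilinearMap φ

/-- The multilinear operator associated to a linear map on the tensor product. -/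
def toMulti (L : (⨂[𝕜] i, X i) →ₗ[𝕜] Y) : MultilinearMap 𝕜 X Y :=
  L.compMultilinearMap (PiTensorProduct.tprod 𝕜)

/-- The finite rank operator (as a linear map on the tensor product) associated to
`v ∈ 𝓛^β(X₁,…,Xₙ) ⊗ Y` via `φ ⊗ y ↦ φ(·)y`. -/
def toOp (β : ReasonableCrossnorm 𝕜 X) :
    ((BetaDual β) ⊗[𝕜] Y) →ₗ[𝕜] ((⨂[𝕜] i, X i) →ₗ[𝕜] Y) :=
  TensorProduct.lift ((LinearMap.smulRightₗ).comp (BetaDual β).subtype)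

/-- The restriction `β|` of a reasonable crossnorm to subspaces `Eᵢ ⊂ Xᵢ`
(Remark 2.1 of the paper: it is again a reasonable crossnorm). -/
def ReasonableCrossnorm.restrict (β : ReasonableCrossnorm 𝕜 X)
    (E : ∀ i, Submodule 𝕜 (X i)) :
    ReasonableCrossnorm 𝕜 (fun i => (E i : Type u)) where
  toFun u := β.toFun (PiTensorProduct.map (fun i => (E i).subtype) u)
  add_le' u v := by simp only [map_add]; exact β.add_le' _ _
  smul' c u := by simp only [map_smul]; exact β.smul' _ _
  le_proj' u :=
    (β.le_proj' _).trans
      (projectiveSeminorm_map_le _ (fun i x => le_of_eq rfl) u)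
  inj_le' u := by
    refine Real.sSup_le ?_ (le_trans (epsSeminorm_nonneg _) (β.inj_le' _))
    rintro r ⟨f, hf, rfl⟩
    choose g hgx hgn using fun i => exists_extension_norm_eq (E i) (f i)
    have key : PiTensorProduct.lift
        ((ContinuousMultilinearMap.mkPiAlgebra 𝕜 ι 𝕜).compContinuousLinearMap
          f).toMultilinearMap u =
        PiTensorProduct.lift
          ((ContinuousMultilinearMap.mkPiAlgebra 𝕜 ι 𝕜).compContinuousLinearMap
            g).toMultilinearMap
          (PiTensorProduct.map (fun i => (E i).subtype) u) := by
      rw [← LinearMap.comp_apply, PiTensorProduct.lift_comp_map]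
      congr 1
      ext m
      simp only [LinearMap.compMultilinearMap_apply, PiTensorProduct.lift.tprod,
        ContinuousMultilinearMap.coe_coe, MultilinearMap.compLinearMap_apply,
        ContinuousMultilinearMap.compContinuousLinearMap_apply,
        ContinuousMultilinearMap.mkPiAlgebra_apply]
      exact Finset.prod_congr rfl fun i _ => (hgx i (m i)).symm
    rw [key]
    refine le_trans (le_csSup (epsSet_bdd _) ⟨g, fun i => (hgn i).le.trans (hf i), rfl⟩)
      (β.inj_le' _)

/-- Restriction of `β`-bounded forms to subspaces. -/
def restrictDual (β : ReasonableCrossnorm 𝕜 X) (E : ∀ i, Submodule 𝕜 (X i)) :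
    (BetaDual β) →ₗ[𝕜] (BetaDual (β.restrict E)) where
  toFun f := ⟨f.1 ∘ₗ PiTensorProduct.map (fun i => (E i).subtype),
    by obtain ⟨C, hC, hb⟩ := f.2; exact ⟨C, hC, fun u => hb _⟩⟩
  map_add' f g := by ext u; rfl
  map_smul' c f := by ext u; rfl

/-- The operator `Q_L ∘ f_T ∘ I_{E₁,…,Eₙ}` between finite dimensional spaces. -/
def smallOp {L : Submodule 𝕜 Y} (hL : IsClosed (L : Set Y))
    (T : MultilinearMap 𝕜 X Y) (E : ∀ i, Submodule 𝕜 (X i)) :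
    MultilinearMap 𝕜 (fun i => (E i : Type u)) (Y ⧸ L) :=
  toMulti (L.mkQ ∘ₗ PiTensorProduct.lift T ∘ₗ PiTensorProduct.map (fun i => (E i).subtype))

end Basic
section Norms

variable {𝕜 : Type u} [RCLike 𝕜] {ι : Type} [Fintype ι] [Nonempty ι] {X : ι → Type u}
    [∀ i, NormedAddCommGroup (X i)] [∀ i, NormedSpace 𝕜 (X i)]
    {Y : Type u} [NormedAddCommGroup Y] [NormedSpace 𝕜 Y]

/-- The Lipschitz constant `Lip^β(f)` of (the restriction to the Segre cone of) a linear
map on the tensor product, with respect to the metric induced by `β`. -/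
def lipschitzNormOn (β : ReasonableCrossnorm 𝕜 X) (f : (⨂[𝕜] i, X i) →ₗ[𝕜] Y) : ℝ :=
  sInf {C | 0 ≤ C ∧ ∀ p ∈ Segre 𝕜 X, ∀ q ∈ Segre 𝕜 X,
    ‖f p - f q‖ ≤ C * β.toFun (p - q)}

/-- The greatest Σ-tensor norm on spaces, `π^β`. -/
def piBetaS (β : ReasonableCrossnorm 𝕜 X) (u : (⨂[𝕜] i, X i) ⊗[𝕜] Y) : ℝ :=
  sInf {r | ∃ (m : ℕ) (p q : Fin m → ⨂[𝕜] i, X i) (y : Fin m → Y),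
    (∀ k, p k ∈ Segre 𝕜 X ∧ q k ∈ Segre 𝕜 X) ∧
    u = ∑ k, (p k - q k) ⊗ₜ[𝕜] y k ∧ r = ∑ k, β.toFun (p k - q k) * ‖y k‖}

/-- The least Σ-tensor norm on spaces, `ε^β`. -/
def epsBetaS (β : ReasonableCrossnorm 𝕜 X) (u : (⨂[𝕜] i, X i) ⊗[𝕜] Y) : ℝ :=
  sSup {r | ∃ (φ : (⨂[𝕜] i, X i) →ₗ[𝕜] 𝕜) (g : Y →L[𝕜] 𝕜),
    (∀ w, ‖φ w‖ ≤ β.toFun w) ∧ ‖g‖ ≤ 1 ∧ r = ‖funcSY φ g u‖}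

/-- The greatest Σ-tensor norm on duals, `π_β`. -/
def piBetaD (β : ReasonableCrossnorm 𝕜 X) (v : (BetaDual β) ⊗[𝕜] Y) : ℝ :=
  sInf {r | ∃ (m : ℕ) (f : Fin m → BetaDual β) (y : Fin m → Y) (C : Fin m → ℝ),
    (∀ k, 0 ≤ C k ∧ ∀ u, ‖(f k).1 u‖ ≤ C k * β.toFun u) ∧
    v = ∑ k, (f k) ⊗ₜ[𝕜] (y k) ∧ r = ∑ k, C k * ‖y k‖}

/-- The least Σ-tensor norm on duals, `ε_β`. -/
def epsBetaD (β : ReasonableCrossnorm 𝕜 X) (v : (BetaDual β) ⊗[𝕜] Y) : ℝ :=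
  sSup {r | ∃ p ∈ Segre 𝕜 X, ∃ q ∈ Segre 𝕜 X, ∃ g : Y →L[𝕜] 𝕜,
    β.toFun (p - q) ≤ 1 ∧ ‖g‖ ≤ 1 ∧ r = ‖evalLD β v ((p - q) ⊗ₜ[𝕜] g)‖}

end Norms
section Structures

variable (𝕜 : Type u) [RCLike 𝕜]

/-- A Σ-ideal of multilinear operators on the class of normed (Banach) spaces
(Definition 3.1): an assignment, to each election `(n, X₁,…,Xₙ, Y, β)`, of a class of
multilinear operators together with an ideal norm, satisfying I1, I2, I3. -/
structure SigmaIdeal where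
  Mem : ∀ {ι : Type} [Fintype ι] [Nonempty ι] {X : ι → Type u}
    [∀ i, NormedAddCommGroup (X i)] [∀ i, NormedSpace 𝕜 (X i)]
    {Y : Type u} [NormedAddCommGroup Y] [NormedSpace 𝕜 Y],
    ReasonableCrossnorm 𝕜 X → MultilinearMap 𝕜 X Y → Prop
  anorm : ∀ {ι : Type} [Fintype ι] [Nonempty ι] {X : ι → Type u}
    [∀ i, NormedAddCommGroup (X i)] [∀ i, NormedSpace 𝕜 (X i)]
    {Y : Type u} [NormedAddCommGroup Y] [NormedSpace 𝕜 Y],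
    ReasonableCrossnorm 𝕜 X → MultilinearMap 𝕜 X Y → ℝ
  /-- I1: rank one operators belong to the components. -/
  I1 : ∀ {ι : Type} [Fintype ι] [Nonempty ι] {X : ι → Type u}
    [∀ i, NormedAddCommGroup (X i)] [∀ i, NormedSpace 𝕜 (X i)]
    {Y : Type u} [NormedAddCommGroup Y] [NormedSpace 𝕜 Y]
    (β : ReasonableCrossnorm 𝕜 X) (φ : MultilinearMap 𝕜 X 𝕜) (C : ℝ), 0 ≤ C →
    (∀ u, ‖PiTensorProduct.lift φ u‖ ≤ C * β.toFun u) → ∀ y : Y,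
    Mem β (rankOne φ y) ∧ anorm β (rankOne φ y) ≤ C * ‖y‖
  /-- I2: `Lip^β(f_T) ≤ A^β(T)`. -/
  I2 : ∀ {ι : Type} [Fintype ι] [Nonempty ι] {X : ι → Type u}
    [∀ i, NormedAddCommGroup (X i)] [∀ i, NormedSpace 𝕜 (X i)]
    {Y : Type u} [NormedAddCommGroup Y] [NormedSpace 𝕜 Y]
    (β : ReasonableCrossnorm 𝕜 X) (T : MultilinearMap 𝕜 X Y), Mem β T →
    ∀ p ∈ Segre 𝕜 X, ∀ q ∈ Segre 𝕜 X,
      ‖PiTensorProduct.lift T p - PiTensorProduct.lift T q‖ ≤ anorm β T * β.toFun (p - q)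
  /-- I3: the Σ-ideal property. -/
  I3 : ∀ {ι κ : Type} [Fintype ι] [Nonempty ι] [Fintype κ] [Nonempty κ]
    {X : ι → Type u} [∀ i, NormedAddCommGroup (X i)] [∀ i, NormedSpace 𝕜 (X i)]
    {Z : κ → Type u} [∀ j, NormedAddCommGroup (Z j)] [∀ j, NormedSpace 𝕜 (Z j)]
    {Y W : Type u} [NormedAddCommGroup Y] [NormedSpace 𝕜 Y]
    [NormedAddCommGroup W] [NormedSpace 𝕜 W]
    (β : ReasonableCrossnorm 𝕜 X) (θ : ReasonableCrossnorm 𝕜 Z)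
    (R : (⨂[𝕜] j, Z j) →ₗ[𝕜] (⨂[𝕜] i, X i)) (CR : ℝ), 0 ≤ CR →
    (∀ v, β.toFun (R v) ≤ CR * θ.toFun v) →
    (∀ p ∈ Segre 𝕜 Z, R p ∈ Segre 𝕜 X) →
    ∀ (T : MultilinearMap 𝕜 X Y), Mem β T → ∀ (S : Y →L[𝕜] W),
    Mem θ (toMulti (S.toLinearMap ∘ₗ PiTensorProduct.lift T ∘ₗ R)) ∧
      anorm θ (toMulti (S.toLinearMap ∘ₗ PiTensorProduct.lift T ∘ₗ R)) ≤
        CR * anorm β T * ‖S‖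

/-- A Σ-tensor norm on spaces (Definition 4.1): an assignment, to each election, of a
norm on `X₁⊗⋯⊗Xₙ⊗Y` satisfying S1, S2 and the uniform property S3. -/
structure SigmaTensorNormOnSpaces where
  tn : ∀ {ι : Type} [Fintype ι] [Nonempty ι] {X : ι → Type u}
    [∀ i, NormedAddCommGroup (X i)] [∀ i, NormedSpace 𝕜 (X i)]
    {Y : Type u} [NormedAddCommGroup Y] [NormedSpace 𝕜 Y],
    ReasonableCrossnorm 𝕜 X → ((⨂[𝕜] i, X i) ⊗[𝕜] Y) → ℝ
  tn_add_le : ∀ {ι : Type} [Fintype ι] [Nonempty ι] {X : ι → Type u}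
    [∀ i, NormedAddCommGroup (X i)] [∀ i, NormedSpace 𝕜 (X i)]
    {Y : Type u} [NormedAddCommGroup Y] [NormedSpace 𝕜 Y]
    (β : ReasonableCrossnorm 𝕜 X) (u v : (⨂[𝕜] i, X i) ⊗[𝕜] Y),
    tn β (u + v) ≤ tn β u + tn β v
  tn_smul : ∀ {ι : Type} [Fintype ι] [Nonempty ι] {X : ι → Type u}
    [∀ i, NormedAddCommGroup (X i)] [∀ i, NormedSpace 𝕜 (X i)]
    {Y : Type u} [NormedAddCommGroup Y] [NormedSpace 𝕜 Y]
    (β : ReasonableCrossnorm 𝕜 X) (c : 𝕜) (u : (⨂[𝕜] i, X i) ⊗[𝕜] Y),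
    tn β (c • u) = ‖c‖ * tn β u
  /-- S1. -/
  S1 : ∀ {ι : Type} [Fintype ι] [Nonempty ι] {X : ι → Type u}
    [∀ i, NormedAddCommGroup (X i)] [∀ i, NormedSpace 𝕜 (X i)]
    {Y : Type u} [NormedAddCommGroup Y] [NormedSpace 𝕜 Y]
    (β : ReasonableCrossnorm 𝕜 X), ∀ p ∈ Segre 𝕜 X, ∀ q ∈ Segre 𝕜 X, ∀ y : Y,
    tn β ((p - q) ⊗ₜ[𝕜] y) ≤ β.toFun (p - q) * ‖y‖
  /-- S2. -/
  S2 : ∀ {ι : Type} [Fintype ι] [Nonempty ι] {X : ι → Type u}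
    [∀ i, NormedAddCommGroup (X i)] [∀ i, NormedSpace 𝕜 (X i)]
    {Y : Type u} [NormedAddCommGroup Y] [NormedSpace 𝕜 Y]
    (β : ReasonableCrossnorm 𝕜 X) (φ : (⨂[𝕜] i, X i) →ₗ[𝕜] 𝕜) (C : ℝ), 0 ≤ C →
    (∀ w, ‖φ w‖ ≤ C * β.toFun w) → ∀ (g : Y →L[𝕜] 𝕜) (u : (⨂[𝕜] i, X i) ⊗[𝕜] Y),
    ‖funcSY φ g u‖ ≤ C * ‖g‖ * tn β u
  /-- S3: the uniform property. -/
  S3 : ∀ {ι κ : Type} [Fintype ι] [Nonempty ι] [Fintype κ] [Nonempty κ]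
    {X : ι → Type u} [∀ i, NormedAddCommGroup (X i)] [∀ i, NormedSpace 𝕜 (X i)]
    {Z : κ → Type u} [∀ j, NormedAddCommGroup (Z j)] [∀ j, NormedSpace 𝕜 (Z j)]
    {Y W : Type u} [NormedAddCommGroup Y] [NormedSpace 𝕜 Y]
    [NormedAddCommGroup W] [NormedSpace 𝕜 W]
    (β : ReasonableCrossnorm 𝕜 X) (θ : ReasonableCrossnorm 𝕜 Z)
    (R : (⨂[𝕜] j, Z j) →ₗ[𝕜] (⨂[𝕜] i, X i)) (CR : ℝ), 0 ≤ CR →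
    (∀ v, β.toFun (R v) ≤ CR * θ.toFun v) →
    (∀ p ∈ Segre 𝕜 Z, R p ∈ Segre 𝕜 X) →
    ∀ (S : W →L[𝕜] Y) (u : (⨂[𝕜] j, Z j) ⊗[𝕜] W),
    tn β (TensorProduct.map R S.toLinearMap u) ≤ CR * ‖S‖ * tn θ u

/-- A Σ-tensor norm on duals (Definition 4.2): an assignment, to each election, of a
norm on `𝓛^β(X₁,…,Xₙ) ⊗ Y` satisfying D1, D2 and the uniform property D3 with respect
to Σ-preserving operators. -/
structure SigmaTensorNormOnDuals where
  tn : ∀ {ι : Type} [Fintype ι] [Nonempty ι] {X : ι → Type u}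
    [∀ i, NormedAddCommGroup (X i)] [∀ i, NormedSpace 𝕜 (X i)]
    {Y : Type u} [NormedAddCommGroup Y] [NormedSpace 𝕜 Y]
    (β : ReasonableCrossnorm 𝕜 X), ((BetaDual β) ⊗[𝕜] Y) → ℝ
  tn_add_le : ∀ {ι : Type} [Fintype ι] [Nonempty ι] {X : ι → Type u}
    [∀ i, NormedAddCommGroup (X i)] [∀ i, NormedSpace 𝕜 (X i)]
    {Y : Type u} [NormedAddCommGroup Y] [NormedSpace 𝕜 Y]
    (β : ReasonableCrossnorm 𝕜 X) (v w : (BetaDual β) ⊗[𝕜] Y),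
    tn β (v + w) ≤ tn β v + tn β w
  tn_smul : ∀ {ι : Type} [Fintype ι] [Nonempty ι] {X : ι → Type u}
    [∀ i, NormedAddCommGroup (X i)] [∀ i, NormedSpace 𝕜 (X i)]
    {Y : Type u} [NormedAddCommGroup Y] [NormedSpace 𝕜 Y]
    (β : ReasonableCrossnorm 𝕜 X) (c : 𝕜) (v : (BetaDual β) ⊗[𝕜] Y),
    tn β (c • v) = ‖c‖ * tn β v
  /-- D1. -/
  D1 : ∀ {ι : Type} [Fintype ι] [Nonempty ι] {X : ι → Type u}
    [∀ i, NormedAddCommGroup (X i)] [∀ i, NormedSpace 𝕜 (X i)]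
    {Y : Type u} [NormedAddCommGroup Y] [NormedSpace 𝕜 Y]
    (β : ReasonableCrossnorm 𝕜 X) (f : BetaDual β) (C : ℝ), 0 ≤ C →
    (∀ u, ‖f.1 u‖ ≤ C * β.toFun u) → ∀ y : Y, tn β (f ⊗ₜ[𝕜] y) ≤ C * ‖y‖
  /-- D2. -/
  D2 : ∀ {ι : Type} [Fintype ι] [Nonempty ι] {X : ι → Type u}
    [∀ i, NormedAddCommGroup (X i)] [∀ i, NormedSpace 𝕜 (X i)]
    {Y : Type u} [NormedAddCommGroup Y] [NormedSpace 𝕜 Y]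
    (β : ReasonableCrossnorm 𝕜 X), ∀ p ∈ Segre 𝕜 X, ∀ q ∈ Segre 𝕜 X,
    ∀ (g : Y →L[𝕜] 𝕜) (v : (BetaDual β) ⊗[𝕜] Y),
    ‖evalLD β v ((p - q) ⊗ₜ[𝕜] g)‖ ≤ β.toFun (p - q) * ‖g‖ * tn β v
  /-- D3: the uniform property with respect to Σ-preserving operators. -/
  D3 : ∀ {ι κ : Type} [Fintype ι] [Nonempty ι] [Fintype κ] [Nonempty κ]
    {X : ι → Type u} [∀ i, NormedAddCommGroup (X i)] [∀ i, NormedSpace 𝕜 (X i)]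
    {Z : κ → Type u} [∀ j, NormedAddCommGroup (Z j)] [∀ j, NormedSpace 𝕜 (Z j)]
    {Y W : Type u} [NormedAddCommGroup Y] [NormedSpace 𝕜 Y]
    [NormedAddCommGroup W] [NormedSpace 𝕜 W]
    (β : ReasonableCrossnorm 𝕜 X) (θ : ReasonableCrossnorm 𝕜 Z)
    (A : (BetaDual β) →ₗ[𝕜] (BetaDual θ)) (CA : ℝ), 0 ≤ CA →
    (∀ (f : BetaDual β) (C : ℝ), 0 ≤ C → (∀ u, ‖f.1 u‖ ≤ C * β.toFun u) →
      ∀ w, ‖(A f).1 w‖ ≤ CA * C * θ.toFun w) →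
    (∀ q ∈ Segre 𝕜 Z, ∃ p ∈ Segre 𝕜 X, ∀ f : BetaDual β, (A f).1 q = f.1 p) →
    ∀ (B : Y →L[𝕜] W) (v : (BetaDual β) ⊗[𝕜] Y),
    tn θ (TensorProduct.map A B.toLinearMap v) ≤ CA * ‖B‖ * tn β v

end Structures
section StructuresFin

variable (𝕜 : Type u) [RCLike 𝕜]

/-- A Σ-ideal of multilinear operators on the class of finite dimensional normed spaces
(Definition 3.1): an assignment, to each election `(n, X₁,…,Xₙ, Y, β)`, of a class of
multilinear operators together with an ideal norm, satisfying I1, I2, I3. -/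
structure SigmaIdealFin where
  Mem : ∀ {ι : Type} [Fintype ι] [Nonempty ι] {X : ι → Type u}
    [∀ i, NormedAddCommGroup (X i)] [∀ i, NormedSpace 𝕜 (X i)] [∀ i, FiniteDimensional 𝕜 (X i)]
    {Y : Type u} [NormedAddCommGroup Y] [NormedSpace 𝕜 Y] [FiniteDimensional 𝕜 Y],
    ReasonableCrossnorm 𝕜 X → MultilinearMap 𝕜 X Y → Prop
  anorm : ∀ {ι : Type} [Fintype ι] [Nonempty ι] {X : ι → Type u}
    [∀ i, NormedAddCommGroup (X i)] [∀ i, NormedSpace 𝕜 (X i)] [∀ i, FiniteDimensional 𝕜 (X i)]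
    {Y : Type u} [NormedAddCommGroup Y] [NormedSpace 𝕜 Y] [FiniteDimensional 𝕜 Y],
    ReasonableCrossnorm 𝕜 X → MultilinearMap 𝕜 X Y → ℝ
  /-- I1: rank one operators belong to the components. -/
  I1 : ∀ {ι : Type} [Fintype ι] [Nonempty ι] {X : ι → Type u}
    [∀ i, NormedAddCommGroup (X i)] [∀ i, NormedSpace 𝕜 (X i)] [∀ i, FiniteDimensional 𝕜 (X i)]
    {Y : Type u} [NormedAddCommGroup Y] [NormedSpace 𝕜 Y] [FiniteDimensional 𝕜 Y]
    (β : ReasonableCrossnorm 𝕜 X) (φ : MultilinearMap 𝕜 X 𝕜) (C : ℝ), 0 ≤ C →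
    (∀ u, ‖PiTensorProduct.lift φ u‖ ≤ C * β.toFun u) → ∀ y : Y,
    Mem β (rankOne φ y) ∧ anorm β (rankOne φ y) ≤ C * ‖y‖
  /-- I2: `Lip^β(f_T) ≤ A^β(T)`. -/
  I2 : ∀ {ι : Type} [Fintype ι] [Nonempty ι] {X : ι → Type u}
    [∀ i, NormedAddCommGroup (X i)] [∀ i, NormedSpace 𝕜 (X i)] [∀ i, FiniteDimensional 𝕜 (X i)]
    {Y : Type u} [NormedAddCommGroup Y] [NormedSpace 𝕜 Y] [FiniteDimensional 𝕜 Y]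
    (β : ReasonableCrossnorm 𝕜 X) (T : MultilinearMap 𝕜 X Y), Mem β T →
    ∀ p ∈ Segre 𝕜 X, ∀ q ∈ Segre 𝕜 X,
      ‖PiTensorProduct.lift T p - PiTensorProduct.lift T q‖ ≤ anorm β T * β.toFun (p - q)
  /-- I3: the Σ-ideal property. -/
  I3 : ∀ {ι κ : Type} [Fintype ι] [Nonempty ι] [Fintype κ] [Nonempty κ]
    {X : ι → Type u} [∀ i, NormedAddCommGroup (X i)] [∀ i, NormedSpace 𝕜 (X i)] [∀ i, FiniteDimensional 𝕜 (X i)]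
    {Z : κ → Type u} [∀ j, NormedAddCommGroup (Z j)] [∀ j, NormedSpace 𝕜 (Z j)] [∀ j, FiniteDimensional 𝕜 (Z j)]
    {Y W : Type u} [NormedAddCommGroup Y] [NormedSpace 𝕜 Y] [FiniteDimensional 𝕜 Y]
    [NormedAddCommGroup W] [NormedSpace 𝕜 W] [FiniteDimensional 𝕜 W]
    (β : ReasonableCrossnorm 𝕜 X) (θ : ReasonableCrossnorm 𝕜 Z)
    (R : (⨂[𝕜] j, Z j) →ₗ[𝕜] (⨂[𝕜] i, X i)) (CR : ℝ), 0 ≤ CR →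
    (∀ v, β.toFun (R v) ≤ CR * θ.toFun v) →
    (∀ p ∈ Segre 𝕜 Z, R p ∈ Segre 𝕜 X) →
    ∀ (T : MultilinearMap 𝕜 X Y), Mem β T → ∀ (S : Y →L[𝕜] W),
    Mem θ (toMulti (S.toLinearMap ∘ₗ PiTensorProduct.lift T ∘ₗ R)) ∧
      anorm θ (toMulti (S.toLinearMap ∘ₗ PiTensorProduct.lift T ∘ₗ R)) ≤
        CR * anorm β T * ‖S‖

/-- A Σ-tensor norm on spaces (Definition 4.1): an assignment, to each election, of a
norm on `X₁⊗⋯⊗Xₙ⊗Y` satisfying S1, S2 and the uniform property S3. -/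
structure SigmaTensorNormOnSpacesFin where
  tn : ∀ {ι : Type} [Fintype ι] [Nonempty ι] {X : ι → Type u}
    [∀ i, NormedAddCommGroup (X i)] [∀ i, NormedSpace 𝕜 (X i)] [∀ i, FiniteDimensional 𝕜 (X i)]
    {Y : Type u} [NormedAddCommGroup Y] [NormedSpace 𝕜 Y] [FiniteDimensional 𝕜 Y],
    ReasonableCrossnorm 𝕜 X → ((⨂[𝕜] i, X i) ⊗[𝕜] Y) → ℝ
  tn_add_le : ∀ {ι : Type} [Fintype ι] [Nonempty ι] {X : ι → Type u}
    [∀ i, NormedAddCommGroup (X i)] [∀ i, NormedSpace 𝕜 (X i)] [∀ i, FiniteDimensional 𝕜 (X i)]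
    {Y : Type u} [NormedAddCommGroup Y] [NormedSpace 𝕜 Y] [FiniteDimensional 𝕜 Y]
    (β : ReasonableCrossnorm 𝕜 X) (u v : (⨂[𝕜] i, X i) ⊗[𝕜] Y),
    tn β (u + v) ≤ tn β u + tn β v
  tn_smul : ∀ {ι : Type} [Fintype ι] [Nonempty ι] {X : ι → Type u}
    [∀ i, NormedAddCommGroup (X i)] [∀ i, NormedSpace 𝕜 (X i)] [∀ i, FiniteDimensional 𝕜 (X i)]
    {Y : Type u} [NormedAddCommGroup Y] [NormedSpace 𝕜 Y] [FiniteDimensional 𝕜 Y]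
    (β : ReasonableCrossnorm 𝕜 X) (c : 𝕜) (u : (⨂[𝕜] i, X i) ⊗[𝕜] Y),
    tn β (c • u) = ‖c‖ * tn β u
  /-- S1. -/
  S1 : ∀ {ι : Type} [Fintype ι] [Nonempty ι] {X : ι → Type u}
    [∀ i, NormedAddCommGroup (X i)] [∀ i, NormedSpace 𝕜 (X i)] [∀ i, FiniteDimensional 𝕜 (X i)]
    {Y : Type u} [NormedAddCommGroup Y] [NormedSpace 𝕜 Y] [FiniteDimensional 𝕜 Y]
    (β : ReasonableCrossnorm 𝕜 X), ∀ p ∈ Segre 𝕜 X, ∀ q ∈ Segre 𝕜 X, ∀ y : Y,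
    tn β ((p - q) ⊗ₜ[𝕜] y) ≤ β.toFun (p - q) * ‖y‖
  /-- S2. -/
  S2 : ∀ {ι : Type} [Fintype ι] [Nonempty ι] {X : ι → Type u}
    [∀ i, NormedAddCommGroup (X i)] [∀ i, NormedSpace 𝕜 (X i)] [∀ i, FiniteDimensional 𝕜 (X i)]
    {Y : Type u} [NormedAddCommGroup Y] [NormedSpace 𝕜 Y] [FiniteDimensional 𝕜 Y]
    (β : ReasonableCrossnorm 𝕜 X) (φ : (⨂[𝕜] i, X i) →ₗ[𝕜] 𝕜) (C : ℝ), 0 ≤ C →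
    (∀ w, ‖φ w‖ ≤ C * β.toFun w) → ∀ (g : Y →L[𝕜] 𝕜) (u : (⨂[𝕜] i, X i) ⊗[𝕜] Y),
    ‖funcSY φ g u‖ ≤ C * ‖g‖ * tn β u
  /-- S3: the uniform property. -/
  S3 : ∀ {ι κ : Type} [Fintype ι] [Nonempty ι] [Fintype κ] [Nonempty κ]
    {X : ι → Type u} [∀ i, NormedAddCommGroup (X i)] [∀ i, NormedSpace 𝕜 (X i)] [∀ i, FiniteDimensional 𝕜 (X i)]
    {Z : κ → Type u} [∀ j, NormedAddCommGroup (Z j)] [∀ j, NormedSpace 𝕜 (Z j)] [∀ j, FiniteDimensional 𝕜 (Z j)]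
    {Y W : Type u} [NormedAddCommGroup Y] [NormedSpace 𝕜 Y] [FiniteDimensional 𝕜 Y]
    [NormedAddCommGroup W] [NormedSpace 𝕜 W] [FiniteDimensional 𝕜 W]
    (β : ReasonableCrossnorm 𝕜 X) (θ : ReasonableCrossnorm 𝕜 Z)
    (R : (⨂[𝕜] j, Z j) →ₗ[𝕜] (⨂[𝕜] i, X i)) (CR : ℝ), 0 ≤ CR →
    (∀ v, β.toFun (R v) ≤ CR * θ.toFun v) →
    (∀ p ∈ Segre 𝕜 Z, R p ∈ Segre 𝕜 X) →
    ∀ (S : W →L[𝕜] Y) (u : (⨂[𝕜] j, Z j) ⊗[𝕜] W),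
    tn β (TensorProduct.map R S.toLinearMap u) ≤ CR * ‖S‖ * tn θ u

/-- A Σ-tensor norm on duals (Definition 4.2): an assignment, to each election, of a
norm on `𝓛^β(X₁,…,Xₙ) ⊗ Y` satisfying D1, D2 and the uniform property D3 with respect
to Σ-preserving operators. -/
structure SigmaTensorNormOnDualsFin where
  tn : ∀ {ι : Type} [Fintype ι] [Nonempty ι] {X : ι → Type u}
    [∀ i, NormedAddCommGroup (X i)] [∀ i, NormedSpace 𝕜 (X i)] [∀ i, FiniteDimensional 𝕜 (X i)]
    {Y : Type u} [NormedAddCommGroup Y] [NormedSpace 𝕜 Y] [FiniteDimensional 𝕜 Y]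
    (β : ReasonableCrossnorm 𝕜 X), ((BetaDual β) ⊗[𝕜] Y) → ℝ
  tn_add_le : ∀ {ι : Type} [Fintype ι] [Nonempty ι] {X : ι → Type u}
    [∀ i, NormedAddCommGroup (X i)] [∀ i, NormedSpace 𝕜 (X i)] [∀ i, FiniteDimensional 𝕜 (X i)]
    {Y : Type u} [NormedAddCommGroup Y] [NormedSpace 𝕜 Y] [FiniteDimensional 𝕜 Y]
    (β : ReasonableCrossnorm 𝕜 X) (v w : (BetaDual β) ⊗[𝕜] Y),
    tn β (v + w) ≤ tn β v + tn β w
  tn_smul : ∀ {ι : Type} [Fintype ι] [Nonempty ι] {X : ι → Type u}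
    [∀ i, NormedAddCommGroup (X i)] [∀ i, NormedSpace 𝕜 (X i)] [∀ i, FiniteDimensional 𝕜 (X i)]
    {Y : Type u} [NormedAddCommGroup Y] [NormedSpace 𝕜 Y] [FiniteDimensional 𝕜 Y]
    (β : ReasonableCrossnorm 𝕜 X) (c : 𝕜) (v : (BetaDual β) ⊗[𝕜] Y),
    tn β (c • v) = ‖c‖ * tn β v
  /-- D1. -/
  D1 : ∀ {ι : Type} [Fintype ι] [Nonempty ι] {X : ι → Type u}
    [∀ i, NormedAddCommGroup (X i)] [∀ i, NormedSpace 𝕜 (X i)] [∀ i, FiniteDimensional 𝕜 (X i)]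
    {Y : Type u} [NormedAddCommGroup Y] [NormedSpace 𝕜 Y] [FiniteDimensional 𝕜 Y]
    (β : ReasonableCrossnorm 𝕜 X) (f : BetaDual β) (C : ℝ), 0 ≤ C →
    (∀ u, ‖f.1 u‖ ≤ C * β.toFun u) → ∀ y : Y, tn β (f ⊗ₜ[𝕜] y) ≤ C * ‖y‖
  /-- D2. -/
  D2 : ∀ {ι : Type} [Fintype ι] [Nonempty ι] {X : ι → Type u}
    [∀ i, NormedAddCommGroup (X i)] [∀ i, NormedSpace 𝕜 (X i)] [∀ i, FiniteDimensional 𝕜 (X i)]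
    {Y : Type u} [NormedAddCommGroup Y] [NormedSpace 𝕜 Y] [FiniteDimensional 𝕜 Y]
    (β : ReasonableCrossnorm 𝕜 X), ∀ p ∈ Segre 𝕜 X, ∀ q ∈ Segre 𝕜 X,
    ∀ (g : Y →L[𝕜] 𝕜) (v : (BetaDual β) ⊗[𝕜] Y),
    ‖evalLD β v ((p - q) ⊗ₜ[𝕜] g)‖ ≤ β.toFun (p - q) * ‖g‖ * tn β v
  /-- D3: the uniform property with respect to Σ-preserving operators. -/
  D3 : ∀ {ι κ : Type} [Fintype ι] [Nonempty ι] [Fintype κ] [Nonempty κ]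
    {X : ι → Type u} [∀ i, NormedAddCommGroup (X i)] [∀ i, NormedSpace 𝕜 (X i)] [∀ i, FiniteDimensional 𝕜 (X i)]
    {Z : κ → Type u} [∀ j, NormedAddCommGroup (Z j)] [∀ j, NormedSpace 𝕜 (Z j)] [∀ j, FiniteDimensional 𝕜 (Z j)]
    {Y W : Type u} [NormedAddCommGroup Y] [NormedSpace 𝕜 Y] [FiniteDimensional 𝕜 Y]
    [NormedAddCommGroup W] [NormedSpace 𝕜 W] [FiniteDimensional 𝕜 W]
    (β : ReasonableCrossnorm 𝕜 X) (θ : ReasonableCrossnorm 𝕜 Z)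
    (A : (BetaDual β) →ₗ[𝕜] (BetaDual θ)) (CA : ℝ), 0 ≤ CA →
    (∀ (f : BetaDual β) (C : ℝ), 0 ≤ C → (∀ u, ‖f.1 u‖ ≤ C * β.toFun u) →
      ∀ w, ‖(A f).1 w‖ ≤ CA * C * θ.toFun w) →
    (∀ q ∈ Segre 𝕜 Z, ∃ p ∈ Segre 𝕜 X, ∀ f : BetaDual β, (A f).1 q = f.1 p) →
    ∀ (B : Y →L[𝕜] W) (v : (BetaDual β) ⊗[𝕜] Y),
    tn θ (TensorProduct.map A B.toLinearMap v) ≤ CA * ‖B‖ * tn β v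

end StructuresFin
section Predicates

variable {𝕜 : Type u} [RCLike 𝕜]

/-- Maximality of a Σ-ideal (Definition 3.2):
`A^β(T) = sup A^{β|}(Q_L f_T I_{E₁,…,Eₙ})` over finite dimensional subspaces
`Eᵢ ⊂ Xᵢ` and finite codimensional closed subspaces `L ⊂ Y`. -/
def SigmaIdeal.IsMaximal (I : SigmaIdeal 𝕜) : Prop :=
  ∀ {ι : Type} [Fintype ι] [Nonempty ι] {X : ι → Type u}
    [∀ i, NormedAddCommGroup (X i)] [∀ i, NormedSpace 𝕜 (X i)]
    [∀ i, CompleteSpace (X i)]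
    {Y : Type u} [NormedAddCommGroup Y] [NormedSpace 𝕜 Y] [CompleteSpace Y]
    (β : ReasonableCrossnorm 𝕜 X) (T : MultilinearMap 𝕜 X Y), I.Mem β T →
    I.anorm β T = sSup {r | ∃ (E : ∀ i, Submodule 𝕜 (X i))
      (_ : ∀ i, FiniteDimensional 𝕜 (E i)) (L : Submodule 𝕜 Y)
      (hL : IsClosed (L : Set Y)) (_ : FiniteDimensional 𝕜 (Y ⧸ L)),
      I.Mem (β.restrict E) (smallOp hL T E) ∧
        r = I.anorm (β.restrict E) (smallOp hL T E)}

/-- A Σ-tensor norm on spaces is finitely generated (Definition 4.3):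
`α^β(u; X, Y) = inf α^{β|}(u; E, F)` over finite dimensional subspaces containing `u`. -/
def SigmaTensorNormOnSpaces.IsFinitelyGenerated (α : SigmaTensorNormOnSpaces 𝕜) : Prop :=
  ∀ {ι : Type} [Fintype ι] [Nonempty ι] {X : ι → Type u}
    [∀ i, NormedAddCommGroup (X i)] [∀ i, NormedSpace 𝕜 (X i)]
    {Y : Type u} [NormedAddCommGroup Y] [NormedSpace 𝕜 Y]
    (β : ReasonableCrossnorm 𝕜 X) (u : (⨂[𝕜] i, X i) ⊗[𝕜] Y),
    α.tn β u = sInf {r | ∃ (E : ∀ i, Submodule 𝕜 (X i))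
      (_ : ∀ i, FiniteDimensional 𝕜 (E i)) (F : Submodule 𝕜 Y)
      (_ : FiniteDimensional 𝕜 F) (u₀ : (⨂[𝕜] i, (E i : Type u)) ⊗[𝕜] F),
      TensorProduct.map (PiTensorProduct.map fun i => (E i).subtype) F.subtype u₀ = u ∧
        r = α.tn (β.restrict E) u₀}

/-- A Σ-tensor norm on duals is cofinitely generated (Definition 4.5):
`ν^β(v) = sup ν^{β|}(R_{E₁,…,Eₙ} ⊗ Q_L (v))` over finite dimensional subspaces
`Eᵢ ⊂ Xᵢ` and finite codimensional closed subspaces `L ⊂ Y`. -/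
def SigmaTensorNormOnDuals.IsCofinitelyGenerated (ν : SigmaTensorNormOnDuals 𝕜) : Prop :=
  ∀ {ι : Type} [Fintype ι] [Nonempty ι] {X : ι → Type u}
    [∀ i, NormedAddCommGroup (X i)] [∀ i, NormedSpace 𝕜 (X i)]
    {Y : Type u} [NormedAddCommGroup Y] [NormedSpace 𝕜 Y]
    (β : ReasonableCrossnorm 𝕜 X) (v : (BetaDual β) ⊗[𝕜] Y),
    ν.tn β v = sSup {r | ∃ (E : ∀ i, Submodule 𝕜 (X i))
      (_ : ∀ i, FiniteDimensional 𝕜 (E i)) (L : Submodule 𝕜 Y)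
      (hL : IsClosed (L : Set Y)) (_ : FiniteDimensional 𝕜 (Y ⧸ L)),
      r = ν.tn (β.restrict E)
        (TensorProduct.map (restrictDual β E) L.mkQ v)}

end Predicates

/-!
Since `ε ≤ β ≤ π`, everything follows from two estimates. On one side, `‖T̃ u‖ ≤ ‖T‖ π(u)`, and
taking `q = 0` in the Segre cone together with `π(⊗ m) ≤ ∏ ‖mᵢ‖` shows that no Lipschitz constant
for any `β` is smaller than `‖T‖`. On the other side, `‖T x - T y‖ ≤ 2ⁿ⁻¹ ‖T‖ ε(⊗x - ⊗y)`.

For the latter, Auerbach's lemma in `span {xᵢ, yᵢ}` and Hahn–Banach give vectors `eᵢₖ` and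
functionals `fᵢₖ` (`k = 1, 2`) of norm at most one with `z = ∑ₖ fᵢₖ(z) eᵢₖ` for `z = xᵢ, yᵢ`.
Expanding every coordinate except one, `i₀`, writes `T x - T y` as a sum of `2ⁿ⁻¹` terms
`T(e_r[i₀ ↦ v_r])` with `v_r = (∏ᵢ fᵢ,ᵣᵢ(xᵢ)) x_{i₀} - (∏ᵢ fᵢ,ᵣᵢ(yᵢ)) y_{i₀}`, and a norming
functional `φ` of `v_r` shows `‖v_r‖ = |(⊗ᵢ fᵢ,ᵣᵢ ⊗ φ)(⊗x - ⊗y)| ≤ ε(⊗x - ⊗y)`.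
-/

section Auerbach

open Function

variable {𝕜 : Type*} [RCLike 𝕜] {E : Type*} [NormedAddCommGroup E] [NormedSpace 𝕜 E]

theorem Module.Basis.continuous_det [FiniteDimensional 𝕜 E] {ι : Type*} [Fintype ι] [DecidableEq ι]
    (b : Module.Basis ι 𝕜 E) : Continuous fun v : ι → E => b.det v := by
  simp only [b.det_apply]
  refine Continuous.matrix_det (continuous_pi fun i => continuous_pi fun j => ?_)
  simp only [Module.Basis.toMatrix_apply, ← b.equivFun_apply]
  exact (continuous_apply i).comp
    ((b.equivFun.toLinearMap.continuous_of_finiteDimensional).comp (continuous_apply j))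

theorem Module.Basis.coord_mul_det_eq_det_update {ι : Type*} [Fintype ι] [DecidableEq ι]
    (b₀ b : Module.Basis ι 𝕜 E) (k : ι) (z : E) :
    b.coord k z * b₀.det b = b₀.det (update b k z) := by
  conv_rhs => rw [← b.sum_repr z]
  rw [AlternatingMap.map_update_sum, Finset.sum_eq_single k]
  · rw [AlternatingMap.map_update_smul, update_eq_self, smul_eq_mul, b.coord_apply]
  · intro l _ hlk
    rw [AlternatingMap.map_update_smul, AlternatingMap.map_update_self _ _ hlk.symm, smul_zero]
  · simp

/- The basis maximises `‖det‖` among families of unit vectors; by Cramer's rule each coordinate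
functional is a ratio of two determinants, hence has norm at most one. -/
theorem exists_auerbach_basis [FiniteDimensional 𝕜 E] :
    ∃ b : Module.Basis (Fin (Module.finrank 𝕜 E)) 𝕜 E,
      (∀ k, ‖b k‖ = 1) ∧ ∀ k z, ‖b.coord k z‖ ≤ ‖z‖ := by
  have := FiniteDimensional.proper_rclike 𝕜 E
  set b₀ := Module.finBasis 𝕜 E
  set S := Set.pi Set.univ fun _ : Fin (Module.finrank 𝕜 E) => Metric.sphere (0 : E) 1
  have normalize : ∀ z : E, z ≠ 0 → ((‖z‖ : 𝕜)⁻¹ • z) ∈ Metric.sphere (0 : E) 1 := fun z hz =>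
    mem_sphere_zero_iff_norm.mpr (norm_smul_inv_norm hz)
  obtain ⟨v, hvS, hmax⟩ := (isCompact_univ_pi fun _ => isCompact_sphere (0 : E) 1).exists_isMaxOn
    ⟨_, fun k _ => normalize (b₀ k) (b₀.ne_zero k)⟩
    (continuous_norm.comp b₀.continuous_det).continuousOn
  have hdet_update : ∀ k z, ‖b₀.det (update v k z)‖ ≤ ‖z‖ * ‖b₀.det v‖ := by
    intro k z
    rcases eq_or_ne z 0 with rfl | hz
    · simp [AlternatingMap.map_update_zero]
    have hmem : update v k ((‖z‖ : 𝕜)⁻¹ • z) ∈ S := by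
      intro l _
      rcases eq_or_ne l k with rfl | hlk
      · rw [update_self]; exact normalize z hz
      · rw [update_of_ne hlk]; exact hvS l (Set.mem_univ l)
    have h : ‖b₀.det (update v k ((‖z‖ : 𝕜)⁻¹ • z))‖ ≤ ‖b₀.det v‖ := hmax hmem
    rwa [AlternatingMap.map_update_smul, norm_smul, norm_inv, RCLike.norm_ofReal, abs_norm,
      inv_mul_le_iff₀ (norm_pos_iff.mpr hz)] at h
  have hdet_ne : b₀.det v ≠ 0 := by
    have h : ‖b₀.det fun k => (‖b₀ k‖ : 𝕜)⁻¹ • b₀ k‖ ≤ ‖b₀.det v‖ :=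
      hmax fun k _ => normalize (b₀ k) (b₀.ne_zero k)
    rw [AlternatingMap.map_smul_univ, b₀.det_self, smul_eq_mul, mul_one] at h
    refine norm_ne_zero_iff.mp (ne_of_gt (lt_of_lt_of_le ?_ h))
    simp [Finset.prod_pos, b₀.ne_zero]
  obtain ⟨hli, hspan⟩ := b₀.is_basis_iff_det.mpr (Ne.isUnit hdet_ne)
  refine ⟨Module.Basis.mk hli hspan.ge, fun k => ?_, fun k z => ?_⟩
  · simpa using mem_sphere_zero_iff_norm.mp (hvS k (Set.mem_univ k))
  · have h := hdet_update k z
    rw [← Module.Basis.coe_mk hli hspan.ge, ← b₀.coord_mul_det_eq_det_update, norm_mul,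
      Module.Basis.coe_mk] at h
    exact le_of_mul_le_mul_right h (norm_pos_iff.mpr hdet_ne)

structure IsContractiveFrameOn {κ : Type*} [Fintype κ] (e : κ → E) (f : κ → StrongDual 𝕜 E)
    (s : Set E) : Prop where
  norm_vec_le_one : ∀ k, ‖e k‖ ≤ 1
  norm_dual_le_one : ∀ k, ‖f k‖ ≤ 1
  sum_eq : ∀ z ∈ s, ∑ k, f k z • e k = z

theorem IsContractiveFrameOn.extend {κ κ' : Type*} [Fintype κ] [Fintype κ'] {e : κ → E}
    {f : κ → StrongDual 𝕜 E} {s : Set E} (h : IsContractiveFrameOn e f s) {j : κ → κ'}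
    (hj : Injective j) : IsContractiveFrameOn (extend j e 0) (extend j f 0) s := by
  classical
  refine ⟨fun k => ?_, fun k => ?_, fun z hz => ?_⟩
  · rw [extend_def]; split_ifs <;> simp [h.norm_vec_le_one]
  · rw [extend_def]; split_ifs <;> simp [h.norm_dual_le_one]
  · refine Eq.trans ?_ (h.sum_eq z hz)
    refine (Fintype.sum_of_injective j hj _ _ (fun k hk => ?_) fun l => ?_).symm
    · rw [extend_apply' _ _ _ hk, extend_apply' _ _ _ hk]; simp
    · rw [hj.extend_apply, hj.extend_apply]

theorem Submodule.exists_isContractiveFrameOn (S : Submodule 𝕜 E) [FiniteDimensional 𝕜 S] :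
    ∃ (e : Fin (Module.finrank 𝕜 S) → E) (f : Fin (Module.finrank 𝕜 S) → StrongDual 𝕜 E),
      IsContractiveFrameOn e f S := by
  obtain ⟨b, hb, hcoord⟩ := exists_auerbach_basis (𝕜 := 𝕜) (E := S)
  have hext : ∀ k, ∃ g : StrongDual 𝕜 E, ‖g‖ ≤ 1 ∧ ∀ z : S, g z = b.coord k z := by
    intro k
    obtain ⟨g, hgS, hgn⟩ := exists_extension_norm_eq S ((b.coord k).mkContinuous 1 fun z => by
      simpa using hcoord k z)
    exact ⟨g, hgn ▸ LinearMap.mkContinuous_norm_le _ zero_le_one _, hgS⟩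
  choose g hgn hgS using hext
  refine ⟨fun k => b k, g, fun k => (hb k).le, hgn, fun z hz => ?_⟩
  have h := congrArg Subtype.val (b.sum_repr ⟨z, hz⟩)
  simp only [Submodule.coe_sum, Submodule.coe_smul] at h
  refine Eq.trans (Finset.sum_congr rfl fun l _ => ?_) h
  rw [hgS l ⟨z, hz⟩, b.coord_apply]

theorem exists_isContractiveFrameOn_pair (x y : E) :
    ∃ (e : Fin 2 → E) (f : Fin 2 → StrongDual 𝕜 E), IsContractiveFrameOn e f {x, y} := by
  set S := Submodule.span 𝕜 (Set.range ![x, y])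
  have : FiniteDimensional 𝕜 S := FiniteDimensional.span_of_finite 𝕜 (Set.finite_range _)
  have hdim : Module.finrank 𝕜 S ≤ 2 :=
    (finrank_range_le_card (R := 𝕜) ![x, y]).trans_eq (Fintype.card_fin 2)
  obtain ⟨e, f, h⟩ := S.exists_isContractiveFrameOn
  have hxy : ({x, y} : Set E) ⊆ S := Set.insert_subset_iff.mpr
    ⟨Submodule.subset_span ⟨0, rfl⟩, Set.singleton_subset_iff.mpr (Submodule.subset_span ⟨1, rfl⟩)⟩
  have h' := h.extend (Fin.castLE_injective hdim)
  exact ⟨_, _, h'.norm_vec_le_one, h'.norm_dual_le_one, fun z hz => h'.sum_eq z (hxy hz)⟩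

end Auerbach

section Expansion

open Finset Fintype Function

variable {R : Type*} [CommSemiring R] {ι : Type*} [Fintype ι] [DecidableEq ι] {M : ι → Type*}
    [∀ i, AddCommMonoid (M i)] [∀ i, Module R (M i)] {N : Type*} [AddCommMonoid N] [Module R N]

theorem MultilinearMap.apply_eq_sum_update_of_eq_sum (T : MultilinearMap R M N) (i₀ : ι)
    {K : Type*} [Fintype K] (k₀ : K) (a : ι → K → R) (e : ∀ i, K → M i) (z : ∀ i, M i)
    (hz : ∀ i ≠ i₀, ∑ k, a i k • e i k = z i) :
    T z = ∑ r ∈ piFinset (update (fun _ : ι => (univ : Finset K)) i₀ {k₀}),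
      (∏ i ∈ univ.erase i₀, a i (r i)) • T (update (fun i => e i (r i)) i₀ (z i₀)) := by
  set g : ∀ i, K → M i := fun i k => update (fun i => a i k • e i k) i₀ (z i₀) i
  have hsum : z = fun i => ∑ k ∈ update (fun _ : ι => (univ : Finset K)) i₀ {k₀} i, g i k := by
    funext i
    rcases eq_or_ne i i₀ with rfl | hi
    · simp [g]
    · simp [g, hi, hz i hi]
  conv_lhs => rw [hsum, T.map_sum_finset]
  refine sum_congr rfl fun r _ => ?_
  have hg : (fun i => g i (r i)) =
      fun i => update (fun i => a i (r i)) i₀ 1 i • update (fun i => e i (r i)) i₀ (z i₀) i := by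
    funext i
    rcases eq_or_ne i i₀ with rfl | hi
    · simp [g]
    · simp [g, hi]
  rw [hg, T.map_smul_univ, prod_update_of_mem (mem_univ i₀), one_mul, sdiff_singleton_eq_erase]

end Expansion

section SegreDifference

open Finset Fintype Function

variable {𝕜 : Type u} [RCLike 𝕜] {ι : Type} [Fintype ι] {X : ι → Type u}
    [∀ i, NormedAddCommGroup (X i)] [∀ i, NormedSpace 𝕜 (X i)]
    {Y : Type u} [NormedAddCommGroup Y] [NormedSpace 𝕜 Y]

theorem ContinuousMultilinearMap.norm_apply_update_le [DecidableEq ι]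
    (T : ContinuousMultilinearMap 𝕜 X Y) (m : ∀ i, X i) (hm : ∀ i, ‖m i‖ ≤ 1) (i₀ : ι) (v : X i₀) :
    ‖T (update m i₀ v)‖ ≤ ‖T‖ * ‖v‖ := by
  refine (T.le_opNorm _).trans (mul_le_mul_of_nonneg_left ?_ (norm_nonneg T))
  rw [← mul_prod_erase univ _ (mem_univ i₀), update_self]
  refine mul_le_of_le_one_right (norm_nonneg v) (prod_le_one (fun _ _ => norm_nonneg _) ?_)
  exact fun i hi => by rw [update_of_ne (ne_of_mem_erase hi)]; exact hm i

variable [Nonempty ι]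

theorem norm_lift_mkPiAlgebra_le_epsSeminorm (g : ∀ i, StrongDual 𝕜 (X i)) (hg : ∀ i, ‖g i‖ ≤ 1)
    (u : ⨂[𝕜] i, X i) :
    ‖lift ((ContinuousMultilinearMap.mkPiAlgebra 𝕜 ι 𝕜).compContinuousLinearMap g).toMultilinearMap
      u‖ ≤ epsSeminorm 𝕜 X u :=
  le_csSup (epsSet_bdd u) ⟨g, hg, rfl⟩

theorem norm_smul_sub_smul_le_epsSeminorm [DecidableEq ι] (i₀ : ι) (f : ∀ i, StrongDual 𝕜 (X i))
    (hf : ∀ i, ‖f i‖ ≤ 1) (x y : ∀ i, X i) :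
    ‖(∏ i ∈ univ.erase i₀, f i (x i)) • x i₀ - (∏ i ∈ univ.erase i₀, f i (y i)) • y i₀‖ ≤
      epsSeminorm 𝕜 X ((⨂ₜ[𝕜] i, x i) - ⨂ₜ[𝕜] i, y i) := by
  set v := (∏ i ∈ univ.erase i₀, f i (x i)) • x i₀ - (∏ i ∈ univ.erase i₀, f i (y i)) • y i₀
  obtain ⟨φ, hφ, hφv⟩ := exists_dual_vector'' 𝕜 v
  have hg : ∀ i, ‖update f i₀ φ i‖ ≤ 1 :=
    (forall_update_iff f fun _ g => ‖g‖ ≤ 1).mpr ⟨hφ, fun i _ => hf i⟩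
  have heval : ∀ w : ∀ i, X i,
      ∏ i, update f i₀ φ i (w i) = φ (w i₀) * ∏ i ∈ univ.erase i₀, f i (w i) := fun w => by
    rw [← mul_prod_erase univ _ (mem_univ i₀), update_self]
    exact congrArg _ (prod_congr rfl fun i hi => by rw [update_of_ne (ne_of_mem_erase hi)])
  calc ‖v‖ = ‖φ v‖ := by rw [hφv, RCLike.norm_ofReal, abs_norm]
    _ = ‖lift ((ContinuousMultilinearMap.mkPiAlgebra 𝕜 ι 𝕜).compContinuousLinearMap
          (update f i₀ φ)).toMultilinearMap ((⨂ₜ[𝕜] i, x i) - ⨂ₜ[𝕜] i, y i)‖ := by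
        simp only [map_sub, lift.tprod, ContinuousMultilinearMap.coe_coe,
          ContinuousMultilinearMap.compContinuousLinearMap_apply,
          ContinuousMultilinearMap.mkPiAlgebra_apply, heval, v, map_smul, smul_eq_mul]
        congr 1
        ring
    _ ≤ _ := norm_lift_mkPiAlgebra_le_epsSeminorm _ hg _

theorem ContinuousMultilinearMap.norm_sub_le_of_isContractiveFrameOn
    (T : ContinuousMultilinearMap 𝕜 X Y) {K : Type*} [Fintype K] [Nonempty K]
    (e : ∀ i, K → X i) (f : ∀ i, K → StrongDual 𝕜 (X i)) (x y : ∀ i, X i)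
    (hframe : ∀ i, IsContractiveFrameOn (e i) (f i) {x i, y i}) :
    ‖T x - T y‖ ≤
      card K ^ (card ι - 1) * ‖T‖ * epsSeminorm 𝕜 X ((⨂ₜ[𝕜] i, x i) - ⨂ₜ[𝕜] i, y i) := by
  classical
  obtain ⟨i₀⟩ := ‹Nonempty ι›
  obtain ⟨k₀⟩ := ‹Nonempty K›
  set A := update (fun _ : ι => (univ : Finset K)) i₀ {k₀}
  have hcard : #(piFinset A) = card K ^ (card ι - 1) := by
    simp [A, apply_update (fun _ s => #s), prod_update_of_mem, card_sdiff]
  set c : (∀ i, X i) → (ι → K) → 𝕜 := fun w r => ∏ i ∈ univ.erase i₀, f i (r i) (w i)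
  have hexpand : ∀ w : ∀ i, X i, (∀ i, ∑ k, f i k (w i) • e i k = w i) →
      T w = ∑ r ∈ piFinset A, c w r • T (update (fun i => e i (r i)) i₀ (w i₀)) := fun w hw =>
    T.toMultilinearMap.apply_eq_sum_update_of_eq_sum i₀ k₀ _ e w fun i _ => hw i
  have hx i := (hframe i).sum_eq (x i) (Set.mem_insert _ _)
  have hy i := (hframe i).sum_eq (y i) (Set.mem_insert_of_mem _ rfl)
  calc ‖T x - T y‖
      = ‖∑ r ∈ piFinset A, T (update (fun i => e i (r i)) i₀ (c x r • x i₀ - c y r • y i₀))‖ := by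
        simp only [hexpand x hx, hexpand y hy, ← sum_sub_distrib, T.map_update_sub,
          T.map_update_smul]
    _ ≤ ∑ r ∈ piFinset A, ‖T‖ * epsSeminorm 𝕜 X ((⨂ₜ[𝕜] i, x i) - ⨂ₜ[𝕜] i, y i) := by
        refine (norm_sum_le _ _).trans (sum_le_sum fun r _ => ?_)
        refine (T.norm_apply_update_le _ (fun i => (hframe i).norm_vec_le_one _) i₀ _).trans ?_
        exact mul_le_mul_of_nonneg_left (norm_smul_sub_smul_le_epsSeminorm i₀ _
          (fun i => (hframe i).norm_dual_le_one _) x y) (norm_nonneg T)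
    _ = _ := by rw [sum_const, hcard, nsmul_eq_mul, Nat.cast_pow, mul_assoc]

theorem ContinuousMultilinearMap.norm_sub_le_two_pow_mul_epsSeminorm
    (T : ContinuousMultilinearMap 𝕜 X Y) (x y : ∀ i, X i) :
    ‖T x - T y‖ ≤
      2 ^ (card ι - 1) * ‖T‖ * epsSeminorm 𝕜 X ((⨂ₜ[𝕜] i, x i) - ⨂ₜ[𝕜] i, y i) := by
  choose e f hframe using fun i => exists_isContractiveFrameOn_pair (𝕜 := 𝕜) (x i) (y i)
  simpa using T.norm_sub_le_of_isContractiveFrameOn e f x y hframe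

end SegreDifference

section SegreLipschitz

open Fintype

variable {𝕜 : Type u} [RCLike 𝕜] {ι : Type} [Fintype ι] [Nonempty ι] {X : ι → Type u}
    [∀ i, NormedAddCommGroup (X i)] [∀ i, NormedSpace 𝕜 (X i)]
    {Y : Type u} [NormedAddCommGroup Y] [NormedSpace 𝕜 Y]

def IsSegreLipschitzWith (β : ReasonableCrossnorm 𝕜 X) (f : (⨂[𝕜] i, X i) →ₗ[𝕜] Y) (C : ℝ) :
    Prop :=
  0 ≤ C ∧ ∀ p ∈ Segre 𝕜 X, ∀ q ∈ Segre 𝕜 X, ‖f p - f q‖ ≤ C * β.toFun (p - q)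

theorem lipschitzNormOn_le {β : ReasonableCrossnorm 𝕜 X} {f : (⨂[𝕜] i, X i) →ₗ[𝕜] Y} {C : ℝ}
    (h : IsSegreLipschitzWith β f C) : lipschitzNormOn β f ≤ C :=
  csInf_le ⟨0, fun _ hC => hC.1⟩ h

theorem le_lipschitzNormOn {β : ReasonableCrossnorm 𝕜 X} {f : (⨂[𝕜] i, X i) →ₗ[𝕜] Y} {a : ℝ}
    (hne : ∃ C, IsSegreLipschitzWith β f C) (h : ∀ C, IsSegreLipschitzWith β f C → a ≤ C) :
    a ≤ lipschitzNormOn β f :=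
  le_csInf hne h

theorem zero_mem_segre : (0 : ⨂[𝕜] i, X i) ∈ Segre 𝕜 X :=
  ⟨0, ((PiTensorProduct.tprod 𝕜).map_coord_zero (Classical.arbitrary ι) rfl).symm⟩

theorem isSegreLipschitzWith_proj_norm (T : ContinuousMultilinearMap 𝕜 X Y) :
    IsSegreLipschitzWith ReasonableCrossnorm.proj (lift T.toMultilinearMap) ‖T‖ := by
  refine ⟨norm_nonneg T, fun p _ q _ => ?_⟩
  rw [← map_sub]
  exact norm_eval_le_projectiveSeminorm T (p - q)

theorem ContinuousMultilinearMap.norm_le_of_isSegreLipschitzWith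
    (T : ContinuousMultilinearMap 𝕜 X Y) {β : ReasonableCrossnorm 𝕜 X} {C : ℝ}
    (h : IsSegreLipschitzWith β (lift T.toMultilinearMap) C) : ‖T‖ ≤ C := by
  refine T.opNorm_le_bound h.1 fun m => ?_
  have hm := h.2 _ ⟨m, rfl⟩ 0 zero_mem_segre
  rw [LinearMap.map_zero, sub_zero, sub_zero, lift.tprod, ContinuousMultilinearMap.coe_coe] at hm
  exact hm.trans (mul_le_mul_of_nonneg_left
    ((β.le_proj' _).trans (projectiveSeminorm_tprod_le m)) h.1)

theorem isSegreLipschitzWith_two_pow (T : ContinuousMultilinearMap 𝕜 X Y)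
    (β : ReasonableCrossnorm 𝕜 X) :
    IsSegreLipschitzWith β (lift T.toMultilinearMap) (2 ^ (card ι - 1) * ‖T‖) := by
  refine ⟨by positivity, ?_⟩
  rintro _ ⟨x, rfl⟩ _ ⟨y, rfl⟩
  rw [lift.tprod, lift.tprod]
  exact (T.norm_sub_le_two_pow_mul_epsSeminorm x y).trans
    (mul_le_mul_of_nonneg_left (β.inj_le' _) (by positivity))

theorem lipschitzNormOn_proj_lift (T : ContinuousMultilinearMap 𝕜 X Y) :
    lipschitzNormOn ReasonableCrossnorm.proj (lift T.toMultilinearMap) = ‖T‖ :=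
  le_antisymm (lipschitzNormOn_le (isSegreLipschitzWith_proj_norm T))
    (le_lipschitzNormOn ⟨_, isSegreLipschitzWith_proj_norm T⟩
      fun _ => T.norm_le_of_isSegreLipschitzWith)

end SegreLipschitz

theorem norm_eq_lip_and_lip_equiv_general
    {𝕜 : Type u} [RCLike 𝕜] {ι : Type} [Fintype ι] [Nonempty ι]
    {X : ι → Type u} [∀ i, NormedAddCommGroup (X i)] [∀ i, NormedSpace 𝕜 (X i)]
    {Y : Type u} [NormedAddCommGroup Y] [NormedSpace 𝕜 Y]
    (T : ContinuousMultilinearMap 𝕜 X Y) (β : ReasonableCrossnorm 𝕜 X) :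
    ‖T‖ = lipschitzNormOn ReasonableCrossnorm.proj
        (PiTensorProduct.lift T.toMultilinearMap) ∧
    lipschitzNormOn ReasonableCrossnorm.proj (PiTensorProduct.lift T.toMultilinearMap) ≤
      lipschitzNormOn β (PiTensorProduct.lift T.toMultilinearMap) ∧
    lipschitzNormOn β (PiTensorProduct.lift T.toMultilinearMap) ≤
      (2 : ℝ) ^ (Fintype.card ι - 1) *
        lipschitzNormOn ReasonableCrossnorm.proj (PiTensorProduct.lift T.toMultilinearMap) := by
  have hβ := isSegreLipschitzWith_two_pow T β
  rw [lipschitzNormOn_proj_lift]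
  exact ⟨rfl, le_lipschitzNormOn ⟨_, hβ⟩ fun _ => T.norm_le_of_isSegreLipschitzWith,
    lipschitzNormOn_le hβ⟩

/-- for a bounded multilinear operator `T`,
`‖T‖ = Lip^π(f_T) ≤ Lip^β(f_T) ≤ 2^(n−1) Lip^π(f_T)`. -/
theorem norm_eq_lip_and_lip_equiv
    {𝕜 : Type u} [RCLike 𝕜] {ι : Type} [Fintype ι] [Nonempty ι]
    {X : ι → Type u} [∀ i, NormedAddCommGroup (X i)] [∀ i, NormedSpace 𝕜 (X i)]
    [∀ i, CompleteSpace (X i)]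
    {Y : Type u} [NormedAddCommGroup Y] [NormedSpace 𝕜 Y] [CompleteSpace Y]
    (T : ContinuousMultilinearMap 𝕜 X Y) (β : ReasonableCrossnorm 𝕜 X) :
    ‖T‖ = lipschitzNormOn ReasonableCrossnorm.proj
        (PiTensorProduct.lift T.toMultilinearMap) ∧
    lipschitzNormOn ReasonableCrossnorm.proj (PiTensorProduct.lift T.toMultilinearMap) ≤
      lipschitzNormOn β (PiTensorProduct.lift T.toMultilinearMap) ∧
    lipschitzNormOn β (PiTensorProduct.lift T.toMultilinearMap) ≤
      (2 : ℝ) ^ (Fintype.card ι - 1) *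
        lipschitzNormOn ReasonableCrossnorm.proj (PiTensorProduct.lift T.toMultilinearMap) :=
  norm_eq_lip_and_lip_equiv_general T β
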